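/- Let r ≥ 4 and k ≥ 1 be integers. There exists a unique solution z = (z^{(a)}_m) of the level-k restricted Q-system of type D_r all of whose entries z^{(a)}_m (a ∈ I, 0 ≤ m ≤ k) are real and strictly positive. Moreover, this positive solution satisfies, for every a ∈ I: (symmetry) z^{(a)}_m = z^{(a)}_{k−m} for 0 ≤ m ≤ k, and (unimodality) z^{(a)}_{m−1} < z^{(a)}_m for 1 ≤ m ≤ ⌊k/2⌋. -/

import Mathlib

/-!
Let `φ_a` be the coordinates of `4ρ` in the simple roots of `D_r`, so that
`2φ_a - ∑_b A_ab φ_b = 4`, and `W(a, m) = φ_a (m (k - m) + 1)`, which is strictly concave both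
along the Dynkin diagram and in `m`. Then `exp W` is a supersolution, so the monotone map
`Q ↦ √(∏_b Q_b^{A_ab} + Q_{m-1} Q_{m+1})` preserves the box `[1, exp W]` and has a fixed point
there by Knaster–Tarski: a positive solution.
For two positive solutions `z`, `w`, the maximum `T` of `(log w - log z) / W` over the grid cannot
be positive: otherwise `w` would touch `z · exp (T W)` from below at an interior point, while the
concavity of `W` makes `z · exp (T W)` a strict supersolution there. This gives uniqueness; the
symmetry follows by applying it to `m ↦ Q (k - m)`, and unimodality from the strict
log-concavity `Q_{m-1} Q_{m+1} < Q_m²` combined with the symmetry.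
-/

/-- The adjacency matrix of the Dynkin diagram `D_r` on the index set `{1, …, r}`:
`A a b = 1` iff (`|a - b| = 1` and `a, b ≤ r - 1`) or `{a, b} = {r - 2, r}`. -/
def adjD (r a b : ℕ) : ℕ :=
  if ((a + 1 = b ∨ b + 1 = a) ∧ a ≤ r - 1 ∧ b ≤ r - 1)
      ∨ (a = r - 2 ∧ b = r) ∨ (a = r ∧ b = r - 2) then 1 else 0

/-- `Q : ℕ → ℕ → ℂ` is a solution of the unrestricted `Q`-system of type `D_r`:
`Q a 0 = 1` and `(Q a m)^2 = ∏_b (Q b m)^(A a b) + Q a (m-1) * Q a (m+1)`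
for all `a ∈ {1, …, r}` and `m ≥ 1`. -/
def IsUnresQSysD (r : ℕ) (Q : ℕ → ℕ → ℂ) : Prop :=
  (∀ a ∈ Finset.Icc 1 r, Q a 0 = 1) ∧
  ∀ a ∈ Finset.Icc 1 r, ∀ m : ℕ, 1 ≤ m →
    (Q a m) ^ 2 = (∏ b ∈ Finset.Icc 1 r, (Q b m) ^ adjD r a b) + Q a (m - 1) * Q a (m + 1)

/-- `Q` is a solution of the level-`k` restricted `Q`-system of type `D_r`:
`Q a 0 = 1`, `Q a k = 1`, and the `Q`-system recurrence holds for `1 ≤ m ≤ k - 1`. -/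
def IsResQSysD (r k : ℕ) (Q : ℕ → ℕ → ℂ) : Prop :=
  (∀ a ∈ Finset.Icc 1 r, Q a 0 = 1) ∧
  (∀ a ∈ Finset.Icc 1 r, Q a k = 1) ∧
  ∀ a ∈ Finset.Icc 1 r, ∀ m : ℕ, 1 ≤ m → m ≤ k - 1 →
    (Q a m) ^ 2 = (∏ b ∈ Finset.Icc 1 r, (Q b m) ^ adjD r a b) + Q a (m - 1) * Q a (m + 1)

open Finset

theorem mul_exp_log_sub_log_div_mul {x y c : ℝ} (hx : 0 < x) (hy : 0 < y) (hc : c ≠ 0) :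
    y * Real.exp ((Real.log x - Real.log y) / c * c) = x := by
  rw [div_mul_cancel₀ _ hc, Real.exp_sub, Real.exp_log hx, Real.exp_log hy]
  field_simp

theorem Real.exp_add_exp_le {x y z : ℝ} (hx : x + 2 ≤ z) (hy : y + 2 ≤ z) :
    Real.exp x + Real.exp y ≤ Real.exp z := by
  have h2 : 2 ≤ Real.exp 2 := by linarith [Real.add_one_le_exp (2 : ℝ)]
  calc Real.exp x + Real.exp y ≤ 2 * Real.exp (z - 2) := by
        rw [two_mul]; gcongr <;> linarith
    _ ≤ Real.exp 2 * Real.exp (z - 2) := by gcongr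
    _ = Real.exp z := by rw [← Real.exp_add]; ring_nf

theorem MonotoneOn.exists_fixedPoint_Icc {α : Type*} [ConditionallyCompleteLattice α]
    {f : α → α} {a b : α} (hf : MonotoneOn f (Set.Icc a b)) (hab : a ≤ b) (ha : a ≤ f a)
    (hb : f b ≤ b) : ∃ x ∈ Set.Icc a b, f x = x := by
  have : Fact (a ≤ b) := ⟨hab⟩
  have hmaps : Set.MapsTo f (Set.Icc a b) (Set.Icc a b) := fun x hx =>
    ⟨ha.trans (hf ⟨le_rfl, hab⟩ hx hx.1), (hf hx ⟨hab, le_rfl⟩ hx.2).trans hb⟩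
  let F : Set.Icc a b →o Set.Icc a b := ⟨hmaps.restrict f _ _, fun x y hxy => hf x.2 y.2 hxy⟩
  exact ⟨F.lfp, F.lfp.2, congrArg Subtype.val F.map_lfp⟩

theorem sub_one_lt_of_mul_lt_sq_of_symm {f : ℕ → ℝ} {k : ℕ} (hpos : ∀ m ≤ k, 0 < f m)
    (hconc : ∀ m, 1 ≤ m → m ≤ k - 1 → f (m - 1) * f (m + 1) < f m ^ 2)
    (hsymm : ∀ m ≤ k, f m = f (k - m)) {m : ℕ} (hm1 : 1 ≤ m) (hm : m ≤ k / 2) :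
    f (m - 1) < f m := by
  have hanti : StrictAntiOn (fun j => f (j + 1) / f j) (Set.Iic (k - 1)) :=
    strictAntiOn_Iic_of_succ_lt fun j hj => by
      simp only [Order.succ_eq_add_one]
      rw [div_lt_div_iff₀ (hpos _ (by omega)) (hpos _ (by omega))]
      simpa [sq, mul_comm] using hconc (j + 1) (by omega) (by omega)
  have hratio : f (k - m + 1) / f (k - m) < f (m - 1 + 1) / f (m - 1) :=
    hanti (Set.mem_Iic.2 (by omega)) (Set.mem_Iic.2 (by omega)) (by omega)
  rw [← hsymm m (by omega), show k - m + 1 = k - (m - 1) by omega, ← hsymm (m - 1) (by omega),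
    Nat.sub_add_cancel hm1, div_lt_div_iff₀ (hpos _ (by omega)) (hpos _ (by omega))] at hratio
  exact lt_of_pow_lt_pow_left₀ 2 (hpos m (by omega)).le (by nlinarith)

namespace QSystem

variable {ι : Type*} {I : Finset ι} {A : ι → ι → ℕ} {k : ℕ}

section Semiring

variable {R : Type*} [CommSemiring R]

variable (I A) in
def rhs (Q : ι → ℕ → R) (a : ι) (m : ℕ) : R :=
  (∏ b ∈ I, (Q b m) ^ A a b) + Q a (m - 1) * Q a (m + 1)

variable (I A k) in
def IsRestrictedSolution (Q : ι → ℕ → R) : Prop :=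
  (∀ a ∈ I, Q a 0 = 1) ∧ (∀ a ∈ I, Q a k = 1) ∧
  ∀ a ∈ I, ∀ m : ℕ, 1 ≤ m → m ≤ k - 1 → (Q a m) ^ 2 = rhs I A Q a m

theorem map_rhs {S : Type*} [CommSemiring S] (f : R →+* S) (Q : ι → ℕ → R) (a : ι) (m : ℕ) :
    f (rhs I A Q a m) = rhs I A (fun b j => f (Q b j)) a m := by
  simp [rhs, map_prod]

theorem isRestrictedSolution_map_iff {S : Type*} [CommSemiring S] {f : R →+* S}
    (hf : Function.Injective f) {Q : ι → ℕ → R} :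
    IsRestrictedSolution I A k (fun a m => f (Q a m)) ↔ IsRestrictedSolution I A k Q := by
  simp only [IsRestrictedSolution, ← map_rhs, ← map_pow, ← map_one f, hf.eq_iff]

theorem IsRestrictedSolution.congr {Q Q' : ι → ℕ → R} (hQ : IsRestrictedSolution I A k Q)
    (h : ∀ a ∈ I, ∀ m ≤ k, Q a m = Q' a m) : IsRestrictedSolution I A k Q' := by
  obtain ⟨h0, hk, hrec⟩ := hQ
  refine ⟨fun a ha => h a ha 0 (Nat.zero_le k) ▸ h0 a ha, fun a ha => h a ha k le_rfl ▸ hk a ha,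
    fun a ha m hm1 hmk => ?_⟩
  have hrhs : rhs I A Q a m = rhs I A Q' a m := by
    unfold rhs
    rw [prod_congr rfl fun b hb => by rw [h b hb m (by omega)], h a ha (m - 1) (by omega),
      h a ha (m + 1) (by omega)]
  rw [← h a ha m (by omega), hrec a ha m hm1 hmk, hrhs]

theorem IsRestrictedSolution.reflect {Q : ι → ℕ → R} (hQ : IsRestrictedSolution I A k Q) :
    IsRestrictedSolution I A k (fun a m => Q a (k - m)) := by
  obtain ⟨h0, hk, hrec⟩ := hQ
  refine ⟨fun a ha => by simpa using hk a ha, fun a ha => by simpa using h0 a ha,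
    fun a ha m hm1 hmk => ?_⟩
  rw [hrec a ha (k - m) (by omega) (by omega), rhs, rhs, mul_comm,
    show k - m - 1 = k - (m + 1) by omega, show k - m + 1 = k - (m - 1) by omega]

end Semiring

section Real

theorem rhs_le_rhs {Q Q' : ι → ℕ → ℝ} {a : ι} {m : ℕ} (ha : a ∈ I) (hm : m + 1 ≤ k)
    (h0 : ∀ b ∈ I, ∀ j ≤ k, 0 ≤ Q b j) (h : ∀ b ∈ I, ∀ j ≤ k, Q b j ≤ Q' b j) :
    rhs I A Q a m ≤ rhs I A Q' a m :=
  add_le_add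
    (prod_le_prod (fun b hb => pow_nonneg (h0 b hb m (by omega)) _)
      fun b hb => pow_le_pow_left₀ (h0 b hb m (by omega)) (h b hb m (by omega)) _)
    (mul_le_mul (h a ha _ (by omega)) (h a ha _ hm) (h0 a ha _ hm)
      ((h0 a ha _ (by omega)).trans (h a ha _ (by omega))))

theorem IsRestrictedSolution.mul_lt_sq {Q : ι → ℕ → ℝ} (hQ : IsRestrictedSolution I A k Q)
    (hpos : ∀ a ∈ I, ∀ m ≤ k, 0 < Q a m) {a : ι} (ha : a ∈ I) {m : ℕ} (hm1 : 1 ≤ m)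
    (hmk : m ≤ k - 1) : Q a (m - 1) * Q a (m + 1) < Q a m ^ 2 := by
  have hprod : 0 < ∏ b ∈ I, Q b m ^ A a b :=
    prod_pos fun b hb => pow_pos (hpos b hb m (by omega)) _
  rw [hQ.2.2 a ha m hm1 hmk, rhs]
  linarith

theorem IsRestrictedSolution.lt_of_le_of_rhs_lt {w Z : ι → ℕ → ℝ}
    (hw : IsRestrictedSolution I A k w) (hw0 : ∀ a ∈ I, ∀ m ≤ k, 0 ≤ w a m)
    (hwZ : ∀ a ∈ I, ∀ m ≤ k, w a m ≤ Z a m) {a : ι} (ha : a ∈ I) {m : ℕ} (hm1 : 1 ≤ m)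
    (hmk : m ≤ k - 1) (hZ : rhs I A Z a m < Z a m ^ 2) : w a m < Z a m := by
  have hsq : w a m ^ 2 < Z a m ^ 2 := by
    rw [hw.2.2 a ha m hm1 hmk]
    exact (rhs_le_rhs ha (by omega) hw0 hwZ).trans_lt hZ
  exact lt_of_pow_lt_pow_left₀ 2 ((hw0 a ha m (by omega)).trans (hwZ a ha m (by omega))) hsq

variable (I A k) in
structure IsBarrier (W : ι → ℕ → ℝ) : Prop where
  nonneg : ∀ a m, 0 ≤ W a m
  pos : ∀ a ∈ I, ∀ m ≤ k, 0 < W a m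
  sum_add_two_le : ∀ a ∈ I, ∀ m, 1 ≤ m → m ≤ k - 1 → ∑ b ∈ I, A a b * W b m + 2 ≤ 2 * W a m
  add_add_two_le : ∀ a ∈ I, ∀ m, 1 ≤ m → m ≤ k - 1 → W a (m - 1) + W a (m + 1) + 2 ≤ 2 * W a m

variable {W : ι → ℕ → ℝ}

theorem IsBarrier.rhs_mul_exp_lt (hW : IsBarrier I A k W) {z : ι → ℕ → ℝ}
    (hz : IsRestrictedSolution I A k z) (hpos : ∀ a ∈ I, ∀ m ≤ k, 0 < z a m) {T : ℝ}
    (hT : 0 < T) {a : ι} (ha : a ∈ I) {m : ℕ} (hm1 : 1 ≤ m) (hmk : m ≤ k - 1) :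
    rhs I A (fun b j => z b j * Real.exp (T * W b j)) a m
      < (z a m * Real.exp (T * W a m)) ^ 2 := by
  have hprod : ∏ b ∈ I, (z b m * Real.exp (T * W b m)) ^ A a b
      = (∏ b ∈ I, z b m ^ A a b) * Real.exp (T * ∑ b ∈ I, A a b * W b m) := by
    rw [mul_sum, Real.exp_sum, ← prod_mul_distrib]
    refine prod_congr rfl fun b _ => ?_
    rw [mul_pow, ← Real.exp_nat_mul]
    ring_nf
  have hsum : Real.exp (T * ∑ b ∈ I, A a b * W b m) < Real.exp (2 * (T * W a m)) := by
    have := hW.sum_add_two_le a ha m hm1 hmk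
    exact Real.exp_lt_exp.2 (by nlinarith)
  have hlevel : Real.exp (T * W a (m - 1)) * Real.exp (T * W a (m + 1))
      < Real.exp (2 * (T * W a m)) := by
    have := hW.add_add_two_le a ha m hm1 hmk
    rw [← Real.exp_add]
    exact Real.exp_lt_exp.2 (by nlinarith)
  have hP : 0 < ∏ b ∈ I, z b m ^ A a b := prod_pos fun b hb => pow_pos (hpos b hb m (by omega)) _
  have hR : 0 < z a (m - 1) * z a (m + 1) :=
    mul_pos (hpos a ha _ (by omega)) (hpos a ha _ (by omega))
  calc rhs I A (fun b j => z b j * Real.exp (T * W b j)) a m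
      = (∏ b ∈ I, z b m ^ A a b) * Real.exp (T * ∑ b ∈ I, A a b * W b m)
        + z a (m - 1) * z a (m + 1)
          * (Real.exp (T * W a (m - 1)) * Real.exp (T * W a (m + 1))) := by
        rw [rhs, hprod]; ring
    _ < (∏ b ∈ I, z b m ^ A a b) * Real.exp (2 * (T * W a m))
        + z a (m - 1) * z a (m + 1) * Real.exp (2 * (T * W a m)) := by gcongr
    _ = (z a m * Real.exp (T * W a m)) ^ 2 := by
        rw [mul_pow, ← Real.exp_nat_mul, hz.2.2 a ha m hm1 hmk, rhs]; push_cast; ring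

theorem IsBarrier.le_of_isRestrictedSolution (hW : IsBarrier I A k W) {z w : ι → ℕ → ℝ}
    (hz : IsRestrictedSolution I A k z) (hw : IsRestrictedSolution I A k w)
    (hzpos : ∀ a ∈ I, ∀ m ≤ k, 0 < z a m) (hwpos : ∀ a ∈ I, ∀ m ≤ k, 0 < w a m) :
    ∀ a ∈ I, ∀ m ≤ k, w a m ≤ z a m := by
  intro a ha m hm
  set U : ι × ℕ → ℝ := fun p => (Real.log (w p.1 p.2) - Real.log (z p.1 p.2)) / W p.1 p.2
  have hgrid : ∀ {b j}, (b, j) ∈ I ×ˢ range (k + 1) ↔ b ∈ I ∧ j ≤ k := by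
    simp
  have hwU : ∀ b ∈ I, ∀ j ≤ k, w b j = z b j * Real.exp (U (b, j) * W b j) := fun b hb j hj =>
    (mul_exp_log_sub_log_div_mul (hwpos b hb j hj) (hzpos b hb j hj) (hW.pos b hb j hj).ne').symm
  obtain ⟨⟨b, j⟩, hp, hmax⟩ := (I ×ˢ range (k + 1)).exists_max_image U ⟨(a, m), hgrid.2 ⟨ha, hm⟩⟩
  obtain ⟨hb, hj⟩ := hgrid.1 hp
  set T := U (b, j)
  have hle : ∀ c ∈ I, ∀ i ≤ k, w c i ≤ z c i * Real.exp (T * W c i) := fun c hc i hi => by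
    rw [hwU c hc i hi]
    gcongr
    · exact (hzpos c hc i hi).le
    · exact (hW.pos c hc i hi).le
    · exact hmax (c, i) (hgrid.2 ⟨hc, hi⟩)
  suffices hT : T ≤ 0 by
    calc w a m ≤ z a m * Real.exp (T * W a m) := hle a ha m hm
      _ ≤ z a m * Real.exp 0 := by
        gcongr
        · exact (hzpos a ha m hm).le
        · exact mul_nonpos_of_nonpos_of_nonneg hT (hW.pos a ha m hm).le
      _ = z a m := by rw [Real.exp_zero, mul_one]
  by_contra! hT
  have hU0 : ∀ i, (∀ c ∈ I, w c i = 1 ∧ z c i = 1) → U (b, i) = 0 := fun i h => by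
    simp [U, (h b hb).1, (h b hb).2]
  have hj0 : j ≠ 0 := by
    rintro rfl
    exact hT.ne' (hU0 0 fun c hc => ⟨hw.1 c hc, hz.1 c hc⟩)
  have hjk : j ≠ k := by
    rintro rfl
    exact hT.ne' (hU0 j fun c hc => ⟨hw.2.1 c hc, hz.2.1 c hc⟩)
  have hj1 : 1 ≤ j := Nat.one_le_iff_ne_zero.2 hj0
  have hjk1 : j ≤ k - 1 := by omega
  have htouch : w b j < z b j * Real.exp (T * W b j) :=
    hw.lt_of_le_of_rhs_lt (fun c hc i hi => (hwpos c hc i hi).le) hle hb hj1 hjk1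
      (hW.rhs_mul_exp_lt hz hzpos hT hb hj1 hjk1)
  exact htouch.ne (hwU b hb j hj)

theorem IsBarrier.eq_of_isRestrictedSolution (hW : IsBarrier I A k W) {z w : ι → ℕ → ℝ}
    (hz : IsRestrictedSolution I A k z) (hw : IsRestrictedSolution I A k w)
    (hzpos : ∀ a ∈ I, ∀ m ≤ k, 0 < z a m) (hwpos : ∀ a ∈ I, ∀ m ≤ k, 0 < w a m) :
    ∀ a ∈ I, ∀ m ≤ k, w a m = z a m := fun a ha m hm =>
  le_antisymm (hW.le_of_isRestrictedSolution hz hw hzpos hwpos a ha m hm)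
    (hW.le_of_isRestrictedSolution hw hz hwpos hzpos a ha m hm)

section Step

variable [DecidableEq ι]

variable (I A k) in
noncomputable def step (g : ι → ℕ → ℝ) (a : ι) (m : ℕ) : ℝ :=
  if a ∈ I ∧ 1 ≤ m ∧ m ≤ k - 1 then √(rhs I A g a m) else 1

theorem monotoneOn_step : MonotoneOn (step I A k) (Set.Ici 0) := fun g hg g' _ hgg' a m => by
  unfold step
  split_ifs with h
  · exact Real.sqrt_le_sqrt
      (rhs_le_rhs (k := k) h.1 (by omega) (fun b _ j _ => hg b j) fun b _ j _ => hgg' b j)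
  · exact le_rfl

theorem one_le_step {g : ι → ℕ → ℝ} (hg : 1 ≤ g) : 1 ≤ step I A k g := fun a m => by
  unfold step
  split_ifs
  · refine Real.one_le_sqrt.2 ?_
    have hprod : 0 ≤ ∏ b ∈ I, g b m ^ A a b :=
      prod_nonneg fun b _ => pow_nonneg (zero_le_one.trans (hg b m)) _
    have := one_le_mul_of_one_le_of_one_le (hg a (m - 1)) (hg a (m + 1))
    rw [rhs]
    linarith
  · exact le_rfl

theorem IsBarrier.step_exp_le (hW : IsBarrier I A k W) :
    step I A k (fun a m => Real.exp (W a m)) ≤ fun a m => Real.exp (W a m) := fun a m => by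
  unfold step
  split_ifs with h
  · obtain ⟨ha, hm1, hmk⟩ := h
    refine (Real.sqrt_le_left (Real.exp_pos _).le).2 ?_
    have hprod : ∏ b ∈ I, Real.exp (W b m) ^ A a b = Real.exp (∑ b ∈ I, A a b * W b m) := by
      rw [Real.exp_sum]
      exact prod_congr rfl fun b _ => (Real.exp_nat_mul _ _).symm
    rw [rhs, hprod, ← Real.exp_add, ← Real.exp_nat_mul]
    push_cast
    exact Real.exp_add_exp_le (hW.sum_add_two_le a ha m hm1 hmk)
      (hW.add_add_two_le a ha m hm1 hmk)
  · exact Real.one_le_exp (hW.nonneg a m)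

theorem IsRestrictedSolution.of_step_eq {g : ι → ℕ → ℝ} (hg : 0 ≤ g) (h : step I A k g = g) :
    IsRestrictedSolution I A k g := by
  have hstep : ∀ a m, step I A k g a m = g a m := fun a m => congrFun (congrFun h a) m
  refine ⟨fun a _ => ?_, fun a _ => ?_, fun a ha m hm1 hmk => ?_⟩
  · rw [← hstep, step, if_neg (by omega)]
  · rw [← hstep, step, if_neg (by omega)]
  · have hrhs : 0 ≤ rhs I A g a m :=
      add_nonneg (prod_nonneg fun b _ => pow_nonneg (hg b m) _) (mul_nonneg (hg a _) (hg a _))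
    rw [← hstep a m, step, if_pos ⟨ha, hm1, hmk⟩, Real.sq_sqrt hrhs]

end Step

theorem IsBarrier.exists_isRestrictedSolution (hW : IsBarrier I A k W) :
    ∃ Q : ι → ℕ → ℝ, IsRestrictedSolution I A k Q ∧ ∀ a m, 1 ≤ Q a m := by
  classical
  obtain ⟨Q, ⟨hQ1, -⟩, hQ⟩ := (monotoneOn_step (I := I) (A := A) (k := k)).mono
    (fun g hg => zero_le_one.trans hg.1) |>.exists_fixedPoint_Icc
    (fun a m => Real.one_le_exp (hW.nonneg a m)) (one_le_step le_rfl) hW.step_exp_le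
  exact ⟨Q, .of_step_eq (zero_le_one.trans hQ1) hQ, hQ1⟩

def levelWeight (k m : ℕ) : ℝ := (m * (k - m) + 1 : ℕ)

theorem one_le_levelWeight (k m : ℕ) : 1 ≤ levelWeight k m := by
  simp only [levelWeight, Nat.one_le_cast, le_add_iff_nonneg_left, zero_le]

theorem levelWeight_sub_one_add_levelWeight_add_one {m : ℕ} (hm1 : 1 ≤ m) (hmk : m + 1 ≤ k) :
    levelWeight k (m - 1) + levelWeight k (m + 1) + 2 = 2 * levelWeight k m := by
  obtain ⟨j, rfl⟩ : ∃ j, m = j + 1 := ⟨m - 1, by omega⟩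
  obtain ⟨n, rfl⟩ : ∃ n, k = j + 2 + n := ⟨k - j - 2, by omega⟩
  simp only [levelWeight, show j + 1 - 1 = j by omega, show j + 2 + n - j = n + 2 by omega,
    show j + 2 + n - (j + 1) = n + 1 by omega, show j + 2 + n - (j + 1 + 1) = n by omega]
  push_cast
  ring

theorem isBarrier_mul_levelWeight {φ : ι → ℝ} (hφ0 : ∀ a, 0 ≤ φ a)
    (hφ1 : ∀ a ∈ I, 1 ≤ φ a) (hAφ : ∀ a ∈ I, ∑ b ∈ I, A a b * φ b + 2 ≤ 2 * φ a) :
    IsBarrier I A k (fun a m => φ a * levelWeight k m) where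
  nonneg a m := mul_nonneg (hφ0 a) (zero_le_one.trans (one_le_levelWeight k m))
  pos a ha m _ :=
    mul_pos (zero_lt_one.trans_le (hφ1 a ha)) (zero_lt_one.trans_le (one_le_levelWeight k m))
  sum_add_two_le a ha m _ _ := by
    have hψ := one_le_levelWeight k m
    have hsum : ∑ b ∈ I, A a b * (φ b * levelWeight k m)
        = (∑ b ∈ I, A a b * φ b) * levelWeight k m := by
      rw [sum_mul]; exact sum_congr rfl fun b _ => by ring
    rw [hsum]
    nlinarith [hAφ a ha]
  add_add_two_le a ha m hm1 hmk := by
    have := levelWeight_sub_one_add_levelWeight_add_one (k := k) hm1 (by omega)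
    nlinarith [hφ1 a ha]

end Real

end QSystem

open QSystem

/-- The coordinates of `4ρ` (`ρ` the Weyl vector) in the simple roots of `D_r`. -/
noncomputable def weightD (r a : ℕ) : ℝ :=
  if a ≤ r - 2 then 2 * a * (2 * r - 1 - a) else r * (r - 1)

theorem weightD_of_le {r a : ℕ} (h : a ≤ r - 2) : weightD r a = 2 * a * (2 * r - 1 - a) :=
  if_pos h

theorem weightD_of_lt {r a : ℕ} (h : r - 2 < a) : weightD r a = r * (r - 1) :=
  if_neg h.not_ge

theorem weightD_nonneg {r : ℕ} (hr : 1 ≤ r) (a : ℕ) : 0 ≤ weightD r a := by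
  rcases le_or_gt a (r - 2) with h | h
  · have : (a : ℝ) + 1 ≤ r := by exact_mod_cast (show a + 1 ≤ r by omega)
    rw [weightD_of_le h]
    have : (0 : ℝ) ≤ a := a.cast_nonneg
    nlinarith
  · have : (1 : ℝ) ≤ r := by exact_mod_cast hr
    rw [weightD_of_lt h]
    nlinarith

theorem one_le_weightD {r a : ℕ} (hr : 4 ≤ r) (ha : a ∈ Icc 1 r) : 1 ≤ weightD r a := by
  rw [mem_Icc] at ha
  have hr' : (4 : ℝ) ≤ r := by exact_mod_cast hr
  rcases le_or_gt a (r - 2) with h | h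
  · have : (a : ℝ) + 2 ≤ r := by exact_mod_cast (show a + 2 ≤ r by omega)
    have : (1 : ℝ) ≤ a := by exact_mod_cast ha.1
    rw [weightD_of_le h]
    nlinarith
  · rw [weightD_of_lt h]
    nlinarith

def neighborsD (r a : ℕ) : Finset ℕ :=
  {b ∈ Icc 1 r | ((a + 1 = b ∨ b + 1 = a) ∧ a ≤ r - 1 ∧ b ≤ r - 1)
    ∨ (a = r - 2 ∧ b = r) ∨ (a = r ∧ b = r - 2)}

theorem sum_adjD_mul (r a : ℕ) (f : ℕ → ℝ) :
    ∑ b ∈ Icc 1 r, (adjD r a b : ℝ) * f b = ∑ b ∈ neighborsD r a, f b := by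
  simp only [adjD, neighborsD, Nat.cast_ite, Nat.cast_one, Nat.cast_zero, ite_mul, one_mul,
    zero_mul, sum_filter]

theorem neighborsD_one {r : ℕ} (hr : 4 ≤ r) : neighborsD r 1 = {2} := by
  ext b; simp [neighborsD]; omega

theorem neighborsD_of_le {r a : ℕ} (h2 : 2 ≤ a) (h : a ≤ r - 3) :
    neighborsD r a = {a - 1, a + 1} := by
  ext b; simp [neighborsD]; omega

theorem neighborsD_sub_two {r : ℕ} (hr : 4 ≤ r) : neighborsD r (r - 2) = {r - 3, r - 1, r} := by
  ext b; simp [neighborsD]; omega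

theorem neighborsD_of_ge {r a : ℕ} (hr : 4 ≤ r) (h1 : r - 1 ≤ a) (h2 : a ≤ r) :
    neighborsD r a = {r - 2} := by
  ext b; simp [neighborsD]; omega

theorem sum_adjD_mul_weightD {r a : ℕ} (hr : 4 ≤ r) (ha : a ∈ Icc 1 r) :
    ∑ b ∈ Icc 1 r, (adjD r a b : ℝ) * weightD r b + 4 = 2 * weightD r a := by
  rw [mem_Icc] at ha
  rw [sum_adjD_mul]
  rcases (by omega : a = 1 ∨ (2 ≤ a ∧ a ≤ r - 3) ∨ a = r - 2 ∨ r - 1 ≤ a) with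
    rfl | ⟨ha2, har⟩ | rfl | har
  · rw [neighborsD_one hr, sum_singleton, weightD_of_le (by omega), weightD_of_le (by omega)]
    push_cast
    ring
  · rw [neighborsD_of_le ha2 har, sum_pair (by omega), weightD_of_le (by omega),
      weightD_of_le (by omega), weightD_of_le (by omega)]
    push_cast [show 1 ≤ a by omega]
    ring
  · rw [neighborsD_sub_two hr, sum_insert (by simp; omega), sum_pair (by omega),
      weightD_of_le (by omega), weightD_of_le le_rfl, weightD_of_lt (by omega),
      weightD_of_lt (by omega)]
    push_cast [show 3 ≤ r by omega, show 2 ≤ r by omega]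
    ring
  · rw [neighborsD_of_ge hr har ha.2, sum_singleton, weightD_of_le le_rfl,
      weightD_of_lt (by omega)]
    push_cast [show 2 ≤ r by omega]
    ring

theorem isBarrier_weightD {r : ℕ} (hr : 4 ≤ r) (k : ℕ) :
    IsBarrier (Icc 1 r) (adjD r) k (fun a m => weightD r a * levelWeight k m) :=
  isBarrier_mul_levelWeight (weightD_nonneg (by omega)) (fun _ ha => one_le_weightD hr ha)
    fun _ ha => by linarith [sum_adjD_mul_weightD hr ha]

theorem isResQSysD_iff {r k : ℕ} {Q : ℕ → ℕ → ℂ} :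
    IsResQSysD r k Q ↔ IsRestrictedSolution (Icc 1 r) (adjD r) k Q :=
  Iff.rfl

theorem stmt0 (r k : ℕ) (hr : 4 ≤ r) :
    ∃ Q : ℕ → ℕ → ℂ,
      (IsResQSysD r k Q ∧
        ∀ a ∈ Finset.Icc 1 r, ∀ m ≤ k, (Q a m).im = 0 ∧ 0 < (Q a m).re) ∧
      (∀ Q' : ℕ → ℕ → ℂ,
        (IsResQSysD r k Q' ∧
          ∀ a ∈ Finset.Icc 1 r, ∀ m ≤ k, (Q' a m).im = 0 ∧ 0 < (Q' a m).re) →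
        ∀ a ∈ Finset.Icc 1 r, ∀ m ≤ k, Q' a m = Q a m) ∧
      (∀ a ∈ Finset.Icc 1 r, ∀ m ≤ k, Q a m = Q a (k - m)) ∧
      (∀ a ∈ Finset.Icc 1 r, ∀ m : ℕ, 1 ≤ m → m ≤ k / 2 → (Q a (m - 1)).re < (Q a m).re) := by
  have hW := isBarrier_weightD hr k
  obtain ⟨z, hz, hz1⟩ := hW.exists_isRestrictedSolution
  have hzpos : ∀ a ∈ Icc 1 r, ∀ m ≤ k, 0 < z a m := fun a _ m _ => zero_lt_one.trans_le (hz1 a m)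
  have huniq : ∀ w, IsRestrictedSolution (Icc 1 r) (adjD r) k w →
      (∀ a ∈ Icc 1 r, ∀ m ≤ k, 0 < w a m) → ∀ a ∈ Icc 1 r, ∀ m ≤ k, w a m = z a m :=
    fun w hw hwpos => hW.eq_of_isRestrictedSolution hz hw hzpos hwpos
  have hsymm : ∀ a ∈ Icc 1 r, ∀ m ≤ k, z a m = z a (k - m) := fun a ha m hm =>
    (huniq _ hz.reflect (fun b hb j _ => hzpos b hb _ (Nat.sub_le k j)) a ha m hm).symm
  have hofReal : ∀ w : ℕ → ℕ → ℝ, IsRestrictedSolution (Icc 1 r) (adjD r) k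
      (fun a m => (w a m : ℂ)) ↔ IsRestrictedSolution (Icc 1 r) (adjD r) k w := fun _ =>
    isRestrictedSolution_map_iff (f := Complex.ofRealHom) Complex.ofReal_injective
  refine ⟨fun a m => z a m, ⟨(hofReal z).2 hz, fun a ha m hm => ⟨rfl, hzpos a ha m hm⟩⟩, ?_,
    fun a ha m hm => congrArg _ (hsymm a ha m hm), fun a ha m hm1 hm => ?_⟩
  · rintro Q' ⟨hQ', hQ'pos⟩ a ha m hm
    have hQ'real : ∀ a ∈ Icc 1 r, ∀ m ≤ k, Q' a m = (Q' a m).re := fun a ha m hm =>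
      Complex.ext rfl (hQ'pos a ha m hm).1
    have hw := (hofReal _).1 ((isResQSysD_iff.1 hQ').congr hQ'real)
    rw [hQ'real a ha m hm, huniq _ hw (fun b hb j hj => (hQ'pos b hb j hj).2) a ha m hm]
  · exact sub_one_lt_of_mul_lt_sq_of_symm (hzpos a ha) (fun j => hz.mul_lt_sq hzpos ha)
      (hsymm a ha) hm1 hm
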